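/- arXiv:1705.08667 — 2 statements merged into one kernel-verified Lean document; each statement's English description precedes it below -/
import Mathlib

section
/- Let G and Ḡ both be connected with diam(G) ≠ diam(Ḡ), and set Δ' = min{Δ(G), Δ(Ḡ)} and M = max{diam(G), diam(Ḡ)} ≥ 3. Then ρ(G) + ρ(Ḡ) ≤ n − ⌈(2M + 3Δ' − 11)/3⌉ and ρ(G)·ρ(Ḡ) ≤ n − ⌈(2M + 3Δ' − 8)/3⌉. -/
open SimpleGraph

def SimpleGraph.IsOpenPacking {V : Type*} (G : SimpleGraph V) (B : Finset V) : Prop :=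
  ∀ v u w, u ∈ B → w ∈ B → G.Adj v u → G.Adj v w → u = w

def SimpleGraph.IsPacking {V : Type*} (G : SimpleGraph V) (B : Finset V) : Prop :=
  ∀ u ∈ B, ∀ w ∈ B, u ≠ w →
    Disjoint (insert u (G.neighborSet u)) (insert w (G.neighborSet w))

noncomputable def SimpleGraph.openPackingNumber {V : Type*} [Fintype V] (G : SimpleGraph V) : ℕ :=
  sSup {k | ∃ B : Finset V, G.IsOpenPacking B ∧ B.card = k}

noncomputable def SimpleGraph.packingNumber {V : Type*} [Fintype V] (G : SimpleGraph V) : ℕ :=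
  sSup {k | ∃ B : Finset V, G.IsPacking B ∧ B.card = k}

/-! Say `diam Ḡ < diam G = M`. Two vertices at distance at least three in a graph have no common
closed neighbour, so they form an edge of the complement dominating all vertices, and the
complement has diameter at most three. Applied to `Ḡ` this gives `diam Ḡ ≤ 2`, hence
`ρ(Ḡ) ≤ 1`, and both bounds follow from `3ρ(G) + 3Δ(G) + 2M ≤ 3n + 8`. For that, count the
vertices of a diametral geodesic `P`, of the closed neighbourhood `N[v]` of a vertex of maximum
degree and of a maximum packing `B`: along `P`, the vertices of `N[v]` lie in a window of three
consecutive positions and those of `B` are at least three positions apart, while `B` meets `N[v]`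
at most once. The constant `8` rather than `9` needs the observation that a point of `B` in
`N[v] \ P` forces `B ∩ P` to miss the window of `N[v] ∩ P`. -/

open Finset

namespace Finset

lemma mul_card_le_of_le_sub {s : Finset ℕ} {d a b : ℕ} (hd : 0 < d) (hs : s ⊆ Ico a b)
    (hsep : ∀ i ∈ s, ∀ j ∈ s, i < j → d ≤ j - i) : d * #s ≤ b - a + d - 1 := by
  have hstep {x y : ℕ} (h : x + d ≤ y) : x / d < y / d := by
    rw [Nat.lt_iff_add_one_le, ← Nat.add_div_right x hd]
    exact Nat.div_le_div_right h
  have hcard : #s ≤ #(range ((b - a + d - 1) / d)) := by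
    refine card_le_card_of_injOn (fun i ↦ (i - a) / d) (fun i hi ↦ ?_) fun i hi j hj hij ↦ ?_
    · have := mem_Ico.mp (hs hi)
      exact mem_range.mpr (hstep (by omega))
    · by_contra hne
      rcases Nat.lt_or_gt_of_ne hne with h | h
      · exact (hstep (by have := hsep i hi j hj h; have := mem_Ico.mp (hs hi); omega)).ne hij
      · exact (hstep (by have := hsep j hj i hi h; have := mem_Ico.mp (hs hj); omega)).ne' hij
  rw [card_range] at hcard
  exact (Nat.mul_le_mul_left d hcard).trans (Nat.mul_div_le _ _)

lemma three_mul_card_le_of_le_sub {s : Finset ℕ} {M : ℕ} (hs : s ⊆ range (M + 1))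
    (hsep : ∀ i ∈ s, ∀ j ∈ s, i < j → 3 ≤ j - i) : 3 * #s ≤ M + 3 := by
  rw [range_eq_Ico] at hs
  have := mul_card_le_of_le_sub (by norm_num) hs hsep
  omega

lemma three_mul_card_le_of_disjoint_Icc {s : Finset ℕ} {M m : ℕ} (hs : s ⊆ range (M + 1))
    (hsep : ∀ i ∈ s, ∀ j ∈ s, i < j → 3 ≤ j - i) (hm : m + 2 ≤ M)
    (hdisj : Disjoint s (Icc m (m + 2))) : 3 * #s ≤ M + 2 := by
  have hsub {a b : ℕ} {p : ℕ → Prop} [DecidablePred p] (h : ∀ i ∈ s, p i → a ≤ i ∧ i < b) :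
      3 * #{i ∈ s | p i} ≤ b - a + 2 :=
    mul_card_le_of_le_sub (by norm_num) (fun i hi ↦ mem_Ico.mpr (h i (mem_filter.mp hi).1
      (mem_filter.mp hi).2)) fun i hi j hj ↦ hsep i (mem_filter.mp hi).1 j (mem_filter.mp hj).1
  have hlow : 3 * #{i ∈ s | i < m} ≤ m - 0 + 2 := hsub fun i _ hi ↦ ⟨i.zero_le, hi⟩
  have hhigh : 3 * #{i ∈ s | ¬i < m} ≤ M + 1 - (m + 3) + 2 := hsub fun i hi hlt ↦ by
    have := mem_range.mp (hs hi)
    have : i ∉ Icc m (m + 2) := disjoint_left.mp hdisj hi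
    rw [mem_Icc] at this
    omega
  have := card_filter_add_card_filter_not (s := s) (· < m)
  omega

lemma subset_Icc_min'_of_sub_le {s : Finset ℕ} (hs : s.Nonempty) {k : ℕ}
    (h : ∀ i ∈ s, ∀ j ∈ s, i ≤ j → j - i ≤ k) : s ⊆ Icc (s.min' hs) (s.min' hs + k) := by
  intro i hi
  have := h _ (s.min'_mem hs) i hi (s.min'_le i hi)
  rw [mem_Icc]
  exact ⟨s.min'_le i hi, by omega⟩

lemma card_le_of_sub_le {s : Finset ℕ} {k : ℕ} (h : ∀ i ∈ s, ∀ j ∈ s, i ≤ j → j - i ≤ k) :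
    #s ≤ k + 1 := by
  rcases s.eq_empty_or_nonempty with rfl | hne
  · simp
  have := card_le_card (subset_Icc_min'_of_sub_le hne h)
  rw [Nat.card_Icc] at this
  omega

lemma three_mul_card_add_card_le_of_disjoint {I J : Finset ℕ} {M : ℕ} (hI : I ⊆ range (M + 1))
    (hIw : ∀ i ∈ I, ∀ j ∈ I, i ≤ j → j - i ≤ 2) (hJ : J ⊆ range (M + 1))
    (hJsep : ∀ i ∈ J, ∀ j ∈ J, i < j → 3 ≤ j - i) (hIJ : Disjoint I J) :
    3 * (#I + #J) ≤ M + 11 := by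
  have hJcard := three_mul_card_le_of_le_sub hJ hJsep
  rcases I.eq_empty_or_nonempty with rfl | hne
  · simp only [card_empty]
    omega
  have hsub := subset_Icc_min'_of_sub_le hne hIw
  have hIcard := card_le_of_sub_le hIw
  by_cases h3 : #I = 3
  · have hIcc := eq_of_subset_of_card_le hsub (by rw [Nat.card_Icc]; omega)
    have hm : I.min' hne + 2 ≤ M := by
      have := mem_range.mp (hI (hIcc ▸ right_mem_Icc.mpr (by omega)))
      omega
    have := three_mul_card_le_of_disjoint_Icc hJ hJsep hm (hIcc ▸ hIJ.symm)
    omega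
  · omega

end Finset

namespace SimpleGraph

variable {V : Type*} {G : SimpleGraph V}

lemma mem_closedNbhd_comm {u v : V} :
    u ∈ insert v (G.neighborSet v) ↔ v ∈ insert u (G.neighborSet u) := by
  simp only [Set.mem_insert_iff, mem_neighborSet, eq_comm (a := u), G.adj_comm u v]

lemma dist_le_one_of_mem_closedNbhd {u v : V} (hu : u ∈ insert v (G.neighborSet v)) :
    G.dist v u ≤ 1 := by
  rcases hu with rfl | h
  · simp
  · exact (dist_eq_one_iff_adj.mpr h).le

lemma dist_le_two_of_mem_closedNbhd {u v w : V} (hu : u ∈ insert v (G.neighborSet v))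
    (hw : w ∈ insert v (G.neighborSet v)) : G.dist u w ≤ 2 := by
  have hr : G.Reachable u v := by
    rcases hu with rfl | h
    · rfl
    · exact h.reachable.symm
  calc G.dist u w ≤ G.dist u v + G.dist v w := hr.dist_triangle_left w
    _ ≤ 1 + 1 := add_le_add (dist_comm (G := G) ▸ dist_le_one_of_mem_closedNbhd hu)
        (dist_le_one_of_mem_closedNbhd hw)

lemma Walk.mem_closedNbhd_of_length_le_one {u z : V} :
    ∀ q : G.Walk u z, q.length ≤ 1 → z ∈ insert u (G.neighborSet u)
  | .nil, _ => Set.mem_insert _ _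
  | .cons h .nil, _ => Set.mem_insert_of_mem _ h
  | .cons _ (.cons _ _), hq => by simp at hq

lemma Reachable.exists_mem_closedNbhd_of_dist_le_two {u w : V} (hr : G.Reachable u w)
    (h : G.dist u w ≤ 2) :
    ∃ z, z ∈ insert u (G.neighborSet u) ∧ z ∈ insert w (G.neighborSet w) := by
  obtain ⟨p, hp⟩ := hr.exists_walk_length_eq_dist
  refine ⟨p.getVert 1, (p.take 1).mem_closedNbhd_of_length_le_one ?_,
    (p.drop 1).reverse.mem_closedNbhd_of_length_le_one ?_⟩
  · rw [Walk.take_length]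
    omega
  · rw [Walk.length_reverse, Walk.drop_length]
    omega

lemma IsPacking.three_le_dist {B : Finset V} (hB : G.IsPacking B) {u w : V} (hu : u ∈ B)
    (hw : w ∈ B) (hne : u ≠ w) (hr : G.Reachable u w) : 3 ≤ G.dist u w := by
  by_contra! h
  obtain ⟨z, hzu, hzw⟩ := hr.exists_mem_closedNbhd_of_dist_le_two (by omega)
  exact Set.disjoint_left.mp (hB u hu w hw hne) hzu hzw

lemma IsPacking.card_inter_closedNbhd_le_one [DecidableEq V] {B : Finset V} (hB : G.IsPacking B)
    (v : V) [Fintype (G.neighborSet v)] : #(B ∩ insert v (G.neighborFinset v)) ≤ 1 := by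
  refine card_le_one.mpr fun u hu w hw ↦ by_contra fun hne ↦ ?_
  simp only [mem_inter, mem_insert, mem_neighborFinset] at hu hw
  exact Set.disjoint_left.mp (hB u hu.1 w hw.1 hne) (mem_closedNbhd_comm.mp hu.2)
    (mem_closedNbhd_comm.mp hw.2)

namespace Walk

variable {u v : V} {p : G.Walk u v}

lemma dist_getVert_getVert (hp : p.length = G.dist u v) {i j : ℕ} (hij : i ≤ j)
    (hj : j ≤ p.length) : G.dist (p.getVert i) (p.getVert j) = j - i := by
  have h := length_eq_dist_of_subwalk hp
    ((p.take j).isSubwalk_drop i |>.trans (p.isSubwalk_take j))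
  calc G.dist (p.getVert i) (p.getVert j) = G.dist ((p.take j).getVert i) (p.getVert j) := by
        rw [take_getVert, min_eq_right hij]
    _ = j - i := by rw [← h, drop_length, take_length, min_eq_left hj]

lemma sub_le_of_dist_le [DecidableEq V] (hp : p.length = G.dist u v) {S : Finset V} {k : ℕ}
    (hS : ∀ x ∈ S, ∀ y ∈ S, G.dist x y ≤ k) :
    ∀ i ∈ {i ∈ range (p.length + 1) | p.getVert i ∈ S},
      ∀ j ∈ {i ∈ range (p.length + 1) | p.getVert i ∈ S}, i ≤ j → j - i ≤ k := by
  intro i hi j hj hij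
  simp only [mem_filter, mem_range] at hi hj
  rw [← p.dist_getVert_getVert hp hij (by omega)]
  exact hS _ hi.2 _ hj.2

lemma le_sub_of_le_dist [DecidableEq V] (hp : p.length = G.dist u v) {S : Finset V} {k : ℕ}
    (hS : ∀ x ∈ S, ∀ y ∈ S, x ≠ y → G.Reachable x y → k ≤ G.dist x y) :
    ∀ i ∈ {i ∈ range (p.length + 1) | p.getVert i ∈ S},
      ∀ j ∈ {i ∈ range (p.length + 1) | p.getVert i ∈ S}, i < j → k ≤ j - i := by
  intro i hi j hj hij
  simp only [mem_filter, mem_range] at hi hj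
  have hdist := p.dist_getVert_getVert hp hij.le (by omega)
  have hpos : G.dist (p.getVert i) (p.getVert j) ≠ 0 := by omega
  rw [← hdist]
  exact hS _ hi.2 _ hj.2 (fun h ↦ hpos (by rw [h, dist_self])) (Reachable.of_dist_ne_zero hpos)

lemma IsPath.card_support_toFinset_inter [DecidableEq V] (hp : p.IsPath) (S : Finset V) :
    #(p.support.toFinset ∩ S) = #{i ∈ range (p.length + 1) | p.getVert i ∈ S} := by
  have himage : {i ∈ range (p.length + 1) | p.getVert i ∈ S}.image p.getVert =
      p.support.toFinset ∩ S := by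
    ext z
    simp only [mem_image, mem_filter, mem_range, mem_inter, List.mem_toFinset,
      mem_support_iff_exists_getVert, Nat.lt_succ_iff]
    constructor
    · rintro ⟨i, ⟨hi, hS⟩, rfl⟩
      exact ⟨⟨i, rfl, hi⟩, hS⟩
    · rintro ⟨⟨i, rfl, hi⟩, hS⟩
      exact ⟨i, ⟨hi, hS⟩, rfl⟩
  rw [← himage, card_image_of_injOn (hp.getVert_injOn.mono fun i hi ↦ ?_)]
  simp only [coe_filter, mem_range, Set.mem_ofPred_eq] at hi ⊢
  omega

lemma IsPath.card_support_toFinset (hp : p.IsPath) [DecidableEq V] :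
    #p.support.toFinset = p.length + 1 := by
  rw [List.toFinset_card_of_nodup hp.support_nodup, length_support]

end Walk

lemma IsPacking.three_mul_card_inter_support_add_le [DecidableEq V] {B : Finset V}
    (hB : G.IsPacking B) {a b : V} {p : G.Walk a b} (hp : p.length = G.dist a b) (v : V)
    [Fintype (G.neighborSet v)] :
    3 * (#(p.support.toFinset ∩ B) +
      #((p.support.toFinset ∪ B) ∩ insert v (G.neighborFinset v))) ≤ p.length + 14 := by
  have hpath := p.isPath_of_length_eq_dist hp
  have hPN := hpath.card_support_toFinset_inter (insert v (G.neighborFinset v))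
  have hPB := hpath.card_support_toFinset_inter B
  set P := p.support.toFinset
  set N := insert v (G.neighborFinset v)
  have hmemN {z : V} (hz : z ∈ N) : z ∈ insert v (G.neighborSet v) := by
    simpa [N] using hz
  have hIw := p.sub_le_of_dist_le hp fun x hx y hy ↦
    dist_le_two_of_mem_closedNbhd (hmemN hx) (hmemN hy)
  have hJsep := p.le_sub_of_le_dist hp fun x hx y hy ↦ hB.three_le_dist hx hy
  have hJ := three_mul_card_le_of_le_sub (filter_subset _ _) hJsep
  by_cases hsub : B ∩ N ⊆ P
  · have hPBN : (P ∪ B) ∩ N ⊆ P ∩ N := fun z hz ↦ by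
      simp only [mem_inter, mem_union] at hz ⊢
      rcases hz with ⟨hzP | hzB, hzN⟩
      · exact ⟨hzP, hzN⟩
      · exact ⟨hsub (mem_inter.mpr ⟨hzB, hzN⟩), hzN⟩
    have := card_le_card hPBN
    have := card_le_of_sub_le hIw
    omega
  obtain ⟨c, hc, hcP⟩ := not_subset.mp hsub
  have honly {z : V} (hz : z ∈ B ∩ N) : z = c :=
    card_le_one.mp (hB.card_inter_closedNbhd_le_one v) _ hz _ hc
  have hPBN : (P ∪ B) ∩ N ⊆ insert c (P ∩ N) := fun z hz ↦ by
    simp only [mem_inter, mem_union, mem_insert] at hz ⊢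
    rcases hz with ⟨hzP | hzB, hzN⟩
    · exact .inr ⟨hzP, hzN⟩
    · exact .inl (honly (mem_inter.mpr ⟨hzB, hzN⟩))
  have hdisj : Disjoint {i ∈ range (p.length + 1) | p.getVert i ∈ N}
      {i ∈ range (p.length + 1) | p.getVert i ∈ B} := Finset.disjoint_left.mpr fun i hiN hiB ↦ by
    simp only [mem_filter] at hiN hiB
    exact hcP (honly (mem_inter.mpr ⟨hiB.2, hiN.2⟩) ▸
      List.mem_toFinset.mpr (p.getVert_mem_support i))
  have :=
    three_mul_card_add_card_le_of_disjoint (filter_subset _ _) hIw (filter_subset _ _) hJsep hdisj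
  have := (card_le_card hPBN).trans (card_insert_le _ _)
  omega

lemma card_add_card_add_card_le [Fintype V] [DecidableEq V] (s t r : Finset V) :
    #s + #t + #r ≤ Fintype.card V + #(s ∩ t) + #((s ∪ t) ∩ r) := by
  have := card_union_add_card_inter s t
  have := card_union_add_card_inter (s ∪ t) r
  have := card_le_univ (s ∪ t ∪ r)
  omega

lemma exists_isPacking_card_eq_packingNumber [Fintype V] (G : SimpleGraph V) :
    ∃ B : Finset V, G.IsPacking B ∧ #B = G.packingNumber := by
  have hne : {k | ∃ B : Finset V, G.IsPacking B ∧ #B = k}.Nonempty :=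
    ⟨0, ∅, fun u hu ↦ absurd hu (notMem_empty u), card_empty⟩
  refine Nat.sSup_mem hne ⟨Fintype.card V, ?_⟩
  rintro _ ⟨B, -, rfl⟩
  exact card_le_univ B

lemma packingNumber_le [Fintype V] {k : ℕ} (h : ∀ B : Finset V, G.IsPacking B → #B ≤ k) :
    G.packingNumber ≤ k :=
  csSup_le' <| by rintro _ ⟨B, hB, rfl⟩; exact h B hB

theorem three_mul_packingNumber_add_le [Fintype V] [DecidableRel G.Adj] (hc : G.Connected) :
    3 * G.packingNumber + 3 * G.maxDegree + 2 * G.diam ≤ 3 * Fintype.card V + 8 := by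
  classical
  have := hc.nonempty
  obtain ⟨B, hB, hBcard⟩ := G.exists_isPacking_card_eq_packingNumber
  obtain ⟨v, hv⟩ := G.exists_maximal_degree_vertex
  obtain ⟨a, b, hab⟩ := G.exists_dist_eq_diam
  obtain ⟨p, hp⟩ := (hc a b).exists_walk_length_eq_dist
  have hkey := hB.three_mul_card_inter_support_add_le hp v
  have hcount := card_add_card_add_card_le p.support.toFinset B (insert v (G.neighborFinset v))
  rw [(p.isPath_of_length_eq_dist hp).card_support_toFinset,
    card_insert_of_notMem (G.notMem_neighborFinset_self v), card_neighborFinset_eq_degree] at hcount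
  omega

lemma dist_compl_le_three (hc' : Gᶜ.Connected) {u w : V} (h : 3 ≤ G.dist u w) (x y : V) :
    Gᶜ.dist x y ≤ 3 := by
  have hne : u ≠ w := by
    rintro rfl
    simp at h
  have huw : Gᶜ.Adj u w := (compl_adj G u w).mpr ⟨hne, fun hadj ↦ by
    simp [dist_eq_one_iff_adj.mpr hadj] at h⟩
  -- no vertex lies in the closed `G`-neighbourhoods of both `u` and `w`
  have hnear (z : V) : ∃ s, (s = u ∨ s = w) ∧ Gᶜ.dist s z ≤ 1 := by
    by_contra! hfar
    have hmem (s : V) (hs : s = u ∨ s = w) : s ∈ insert z (G.neighborSet z) := by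
      refine mem_closedNbhd_comm.mp (by_contra fun hz ↦ (hfar s hs).not_ge ?_)
      refine (dist_eq_one_iff_adj.mpr ((compl_adj G s z).mpr ⟨?_, ?_⟩)).le
      · exact fun hsz ↦ hz (hsz ▸ Set.mem_insert _ _)
      · exact fun hsz ↦ hz (Set.mem_insert_of_mem _ hsz)
    have := dist_le_two_of_mem_closedNbhd (hmem u (.inl rfl)) (hmem w (.inr rfl))
    omega
  obtain ⟨s, hs, hsx⟩ := hnear x
  obtain ⟨t, ht, hty⟩ := hnear y
  have hst : Gᶜ.dist s t ≤ 1 := dist_le_one_of_mem_closedNbhd <| by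
    rcases hs with rfl | rfl <;> rcases ht with rfl | rfl <;> simp [huw, huw.symm]
  calc Gᶜ.dist x y ≤ Gᶜ.dist x s + Gᶜ.dist s y := hc'.dist_triangle
    _ ≤ Gᶜ.dist s x + (Gᶜ.dist s t + Gᶜ.dist t y) := by
        rw [dist_comm (u := x)]
        exact Nat.add_le_add_left hc'.dist_triangle _
    _ ≤ 1 + (1 + 1) := by gcongr

lemma diam_compl_le_three (hc' : Gᶜ.Connected) (h : 3 ≤ G.diam) : Gᶜ.diam ≤ 3 := by
  have : Nonempty V := hc'.nonempty
  obtain ⟨u, w, huw⟩ := G.exists_dist_eq_diam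
  obtain ⟨x, y, hxy⟩ := Gᶜ.exists_dist_eq_diam
  exact hxy ▸ dist_compl_le_three hc' (huw ▸ h) x y

lemma diam_compl_le_two_of_lt (hc : G.Connected) (hlt : Gᶜ.diam < G.diam) : Gᶜ.diam ≤ 2 := by
  by_contra! h
  have := diam_compl_le_three (G := Gᶜ) (by rwa [compl_compl]) h
  rw [compl_compl] at this
  omega

lemma packingNumber_le_one_of_diam_le_two [Fintype V] (hc : G.Connected) (h : G.diam ≤ 2) :
    G.packingNumber ≤ 1 := by
  have : Nonempty V := hc.nonempty
  refine packingNumber_le fun B hB ↦ card_le_one.mpr fun u hu w hw ↦ by_contra fun hne ↦ ?_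
  have := hB.three_le_dist hu hw hne (hc u w)
  have := dist_le_diam (connected_iff_ediam_ne_top.mp hc) (u := u) (v := w)
  omega

end SimpleGraph

lemma le_sub_ceil_div_three_iff {z n k : ℤ} : z ≤ n - ⌈(k : ℚ) / 3⌉ ↔ k ≤ 3 * (n - z) := by
  rw [le_sub_comm, Int.ceil_le, div_le_iff₀ three_pos, mul_comm]
  norm_cast

lemma add_le_and_mul_le_of_three_mul_add_le {p q D d M n : ℕ} (hq : q ≤ 1) (hd : d ≤ D)
    (h : 3 * p + 3 * D + 2 * M ≤ 3 * n + 8) :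
    (p + q : ℤ) ≤ n - ⌈((2 * M + 3 * d - 11 : ℤ) : ℚ) / 3⌉ ∧
      (p * q : ℤ) ≤ n - ⌈((2 * M + 3 * d - 8 : ℤ) : ℚ) / 3⌉ := by
  have hpq : p * q ≤ p := mul_le_of_le_one_right p.zero_le hq
  constructor <;> rw [le_sub_ceil_div_three_iff] <;> omega

open scoped Classical in
theorem stmt_15_general {V : Type*} [Fintype V] (G : SimpleGraph V)
    (hc : G.Connected) (hc' : Gᶜ.Connected)
    (hne : G.diam ≠ Gᶜ.diam) :
    (G.packingNumber + Gᶜ.packingNumber : ℤ) ≤ (Fintype.card V : ℤ) -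
        ⌈((2 * (max G.diam Gᶜ.diam) + 3 * (min G.maxDegree Gᶜ.maxDegree) - 11 : ℤ) : ℚ) / 3⌉ ∧
      (G.packingNumber * Gᶜ.packingNumber : ℤ) ≤ (Fintype.card V : ℤ) -
        ⌈((2 * (max G.diam Gᶜ.diam) + 3 * (min G.maxDegree Gᶜ.maxDegree) - 8 : ℤ) : ℚ) / 3⌉ := by
  rcases hne.lt_or_gt with hlt | hlt
  · have h2 : G.diam ≤ 2 := by
      simpa using diam_compl_le_two_of_lt (G := Gᶜ) hc' (by simpa using hlt)
    rw [max_eq_right hlt.le, add_comm, mul_comm (G.packingNumber : ℤ)]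
    exact add_le_and_mul_le_of_three_mul_add_le (packingNumber_le_one_of_diam_le_two hc h2)
      (min_le_right _ _) (three_mul_packingNumber_add_le hc')
  · rw [max_eq_left hlt.le]
    exact add_le_and_mul_le_of_three_mul_add_le
      (packingNumber_le_one_of_diam_le_two hc' (diam_compl_le_two_of_lt hc hlt)) (min_le_left _ _)
      (three_mul_packingNumber_add_le hc)

open scoped Classical in
theorem stmt_15 {V : Type*} [Fintype V] (G : SimpleGraph V)
    (hc : G.Connected) (hc' : Gᶜ.Connected)
    (hne : G.diam ≠ Gᶜ.diam) (hM : 3 ≤ max G.diam Gᶜ.diam) :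
    (G.packingNumber + Gᶜ.packingNumber : ℤ) ≤ (Fintype.card V : ℤ) -
        ⌈((2 * (max G.diam Gᶜ.diam) + 3 * (min G.maxDegree Gᶜ.maxDegree) - 11 : ℤ) : ℚ) / 3⌉ ∧
      (G.packingNumber * Gᶜ.packingNumber : ℤ) ≤ (Fintype.card V : ℤ) -
        ⌈((2 * (max G.diam Gᶜ.diam) + 3 * (min G.maxDegree Gᶜ.maxDegree) - 8 : ℤ) : ℚ) / 3⌉ :=
  stmt_15_general G hc hc' hne
end

section
/- If G is a connected graph of order n ≥ 3 with ω(G) ≥ 3 and ρ_o(G) = n − ω(G), then Δ(G) ∈ {ω(G), ω(G) + 1}; moreover, if Δ(G) = ω(G) + 1, then Δ(G) = n − 1 and δ(G) = 1. -/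
open SimpleGraph

/-!
Let `B` be a maximum open packing, so `|B| = n - ω`. A vertex has at most one neighbour in `B`,
hence `Δ ≤ (n - |B|) + 1 = ω + 1`. Since `|B| ≥ 1`, a maximum clique misses some vertex, and in a
connected graph some clique vertex then has a neighbour outside the clique, so `Δ ≥ ω`.
If `deg v = ω + 1`, equality forces `v ∈ B` and `v` adjacent to every vertex outside `B`; the
packing condition then makes `N[v]` closed under adjacency, so `v` is universal and `n = ω + 2`.
Thus `B = {v, u}`, and `u`, whose neighbours would otherwise be common neighbours of `u` and `v`,
is a leaf.
-/

open Finset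

namespace SimpleGraph

variable {V : Type*} {G : SimpleGraph V}

lemma Preconnected.mem_of_adj_closed (hG : G.Preconnected) {S : Set V}
    (hS : ∀ ⦃a b⦄, a ∈ S → G.Adj a b → b ∈ S) {a : V} (ha : a ∈ S) (b : V) : b ∈ S := by
  induction (G.reachable_iff_reflTransGen a b).mp (hG a b) with
  | refl => exact ha
  | tail _ hbc ih => exact hS ih hbc

lemma IsClique.erase_subset_neighborFinset [DecidableEq V] [Fintype V] [DecidableRel G.Adj]
    {K : Finset V} (hK : G.IsClique (K : Set V)) {a : V} (ha : a ∈ K) :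
    K.erase a ⊆ G.neighborFinset a := fun _ hb =>
  (G.mem_neighborFinset _ _).mpr (hK ha (mem_erase.mp hb).2 (mem_erase.mp hb).1.symm)

/-- A clique missing some vertex of a connected graph cannot be closed under adjacency, so one of
its vertices has a neighbour outside it. -/
lemma IsNClique.le_maxDegree [Fintype V] [DecidableRel G.Adj] (hG : G.Preconnected) {k : ℕ}
    {K : Finset V} (hK : G.IsNClique k K) (hk : k < Fintype.card V) : k ≤ G.maxDegree := by
  classical
  obtain ⟨w, -, hw⟩ := exists_mem_notMem_of_card_lt_card (s := K) (t := univ)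
    (by rwa [card_univ, hK.card_eq])
  by_contra! hlt
  obtain ⟨a, ha⟩ : K.Nonempty := card_pos.mp (hK.card_eq ▸ by omega)
  have hN : ∀ a ∈ K, G.neighborFinset a = K.erase a := fun a ha =>
    (eq_of_subset_of_card_le (hK.isClique.erase_subset_neighborFinset ha) (by
      rw [card_erase_of_mem ha, hK.card_eq, card_neighborFinset_eq_degree]
      have := G.degree_le_maxDegree a
      omega)).symm
  have hclosed : ∀ ⦃a b⦄, a ∈ (K : Set V) → G.Adj a b → b ∈ (K : Set V) := fun a b ha hab =>
    mem_of_mem_erase (hN a ha ▸ (G.mem_neighborFinset a b).mpr hab)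
  exact hw (hG.mem_of_adj_closed hclosed (mem_coe.mpr ha) w)

section OpenPacking

lemma isOpenPacking_singleton (x : V) : G.IsOpenPacking {x} := fun _ _ _ hu hw _ _ =>
  (mem_singleton.mp hu).trans (mem_singleton.mp hw).symm

variable [Fintype V]

lemma bddAbove_openPacking_cards :
    BddAbove {k | ∃ B : Finset V, G.IsOpenPacking B ∧ B.card = k} :=
  ⟨Fintype.card V, fun _ ⟨B, _, hB⟩ => hB ▸ B.card_le_univ⟩

lemma exists_isOpenPacking_card_eq_openPackingNumber :
    ∃ B : Finset V, G.IsOpenPacking B ∧ B.card = G.openPackingNumber := by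
  refine Nat.sSup_mem ?_ bddAbove_openPacking_cards
  exact ⟨0, ∅, fun _ _ _ hu => absurd hu (notMem_empty _), card_empty⟩

lemma openPackingNumber_pos [Nonempty V] : 0 < G.openPackingNumber :=
  let ⟨x⟩ := ‹Nonempty V›
  le_csSup bddAbove_openPacking_cards ⟨{x}, isOpenPacking_singleton x, card_singleton x⟩

variable [DecidableRel G.Adj] {B : Finset V} {u v : V}

lemma IsOpenPacking.card_neighborFinset_inter_le_one [DecidableEq V] (hB : G.IsOpenPacking B)
    (v : V) : (G.neighborFinset v ∩ B).card ≤ 1 :=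
  card_le_one.mpr fun a ha b hb => by
    simp only [mem_inter, mem_neighborFinset] at ha hb
    exact hB v a b ha.2 hb.2 ha.1 hb.1

lemma IsOpenPacking.card_le_card_neighborFinset_sdiff [DecidableEq V] (hB : G.IsOpenPacking B)
    (v : V) : G.degree v ≤ (G.neighborFinset v \ B).card + 1 := by
  rw [← card_neighborFinset_eq_degree, ← card_sdiff_add_card_inter _ B]
  exact Nat.add_le_add_left (hB.card_neighborFinset_inter_le_one v) _

lemma IsOpenPacking.degree_le (hB : G.IsOpenPacking B) (v : V) :
    G.degree v ≤ Fintype.card V - B.card + 1 := by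
  classical
  have hsub : G.neighborFinset v \ B ⊆ Bᶜ := fun _ hx => mem_compl.mpr (mem_sdiff.mp hx).2
  have := card_le_card hsub
  rw [card_compl] at this
  have := hB.card_le_card_neighborFinset_sdiff v
  omega

lemma IsOpenPacking.maxDegree_le (hB : G.IsOpenPacking B) :
    G.maxDegree ≤ Fintype.card V - B.card + 1 :=
  G.maxDegree_le_of_forall_degree_le _ hB.degree_le

lemma IsOpenPacking.compl_subset_neighborFinset [DecidableEq V] (hB : G.IsOpenPacking B)
    (hv : G.degree v = Fintype.card V - B.card + 1) : Bᶜ ⊆ G.neighborFinset v := by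
  have hsub : G.neighborFinset v \ B ⊆ Bᶜ := fun _ hx => mem_compl.mpr (mem_sdiff.mp hx).2
  have hcard : Bᶜ.card ≤ (G.neighborFinset v \ B).card := by
    have := hB.card_le_card_neighborFinset_sdiff v
    rw [card_compl]
    omega
  rw [← eq_of_subset_of_card_le hsub hcard]
  exact sdiff_subset

lemma IsOpenPacking.mem_of_degree_eq (hB : G.IsOpenPacking B)
    (hv : G.degree v = Fintype.card V - B.card + 1) : v ∈ B := by
  classical
  by_contra hvB
  exact G.notMem_neighborFinset_self v (hB.compl_subset_neighborFinset hv (mem_compl.mpr hvB))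

/-- The closed neighbourhood of `v` is closed under adjacency: a neighbour `a` of `v` adjacent to
some `b ∉ N[v]` would be a common neighbour of `v` and `b`, both of which lie in `B`. -/
lemma IsOpenPacking.isUniversal_of_degree_eq (hG : G.Preconnected) (hB : G.IsOpenPacking B)
    (hv : G.degree v = Fintype.card V - B.card + 1) : G.IsUniversal v := by
  classical
  have hclosed : ∀ ⦃a b⦄, a ∈ {w | w = v ∨ G.Adj v w} → G.Adj a b →
      b ∈ {w | w = v ∨ G.Adj v w} := by
    rintro a b (rfl | hva) hab
    · exact Or.inr hab
    · rcases eq_or_ne b v with rfl | hbv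
      · exact Or.inl rfl
      refine Or.inr (by_contra fun hvb => hbv ?_)
      have hbB : b ∈ B := by
        by_contra hbB
        exact hvb ((G.mem_neighborFinset v b).mp
          (hB.compl_subset_neighborFinset hv (mem_compl.mpr hbB)))
      exact hB a b v hbB (hB.mem_of_degree_eq hv) hab hva.symm
  intro w hvw
  exact ((hG.mem_of_adj_closed hclosed (Or.inl rfl) w).resolve_left (Ne.symm hvw))

lemma IsOpenPacking.degree_le_one_of_isUniversal (hB : G.IsOpenPacking B) (hv : G.IsUniversal v)
    (hvB : v ∈ B) (huB : u ∈ B) (huv : u ≠ v) : G.degree u ≤ 1 := by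
  rw [← card_neighborFinset_eq_degree, ← card_singleton v]
  refine card_le_card fun y hy => mem_singleton.mpr ?_
  by_contra hyv
  exact huv (hB y u v huB hvB ((G.mem_neighborFinset u y).mp hy).symm (hv (Ne.symm hyv)).symm)

end OpenPacking

end SimpleGraph

theorem stmt_18_general {V : Type*} [Fintype V] (G : SimpleGraph V) [DecidableRel G.Adj]
    (hc : G.Connected)
    (h : G.openPackingNumber = Fintype.card V - G.cliqueNum) :
    (G.maxDegree = G.cliqueNum ∨ G.maxDegree = G.cliqueNum + 1) ∧
      (G.maxDegree = G.cliqueNum + 1 →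
        G.maxDegree = Fintype.card V - 1 ∧ G.minDegree = 1) := by
  have := hc.nonempty
  obtain ⟨B, hB, hBcard⟩ := G.exists_isOpenPacking_card_eq_openPackingNumber
  obtain ⟨K, hK⟩ := G.exists_isNClique_cliqueNum
  have hKcard : G.cliqueNum ≤ Fintype.card V := hK.card_eq ▸ K.card_le_univ
  have hρ := G.openPackingNumber_pos
  have hub := hB.maxDegree_le
  have hlb := hK.le_maxDegree hc.preconnected (by omega)
  refine ⟨by omega, fun hΔ => ?_⟩
  obtain ⟨v, hv⟩ := G.exists_maximal_degree_vertex
  have hdeg : G.degree v = Fintype.card V - B.card + 1 := by omega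
  have hvu := hB.isUniversal_of_degree_eq hc.preconnected hdeg
  have hΔn : G.maxDegree = Fintype.card V - 1 := hv ▸ (G.degree_eq_card_sub_one v).mpr hvu
  obtain ⟨u, huB, huv⟩ := B.exists_mem_ne (by omega) v
  have hu := hB.degree_le_one_of_isUniversal hvu (hB.mem_of_degree_eq hdeg) huB huv
  have : Nontrivial V := Fintype.one_lt_card_iff_nontrivial.mp (by omega)
  exact ⟨hΔn, le_antisymm ((G.minDegree_le_degree u).trans hu)
    hc.preconnected.minDegree_pos_of_nontrivial⟩

theorem stmt_18 {V : Type*} [Fintype V] (G : SimpleGraph V) [DecidableRel G.Adj]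
    (hc : G.Connected) (hn : 3 ≤ Fintype.card V) (hw : 3 ≤ G.cliqueNum)
    (h : G.openPackingNumber = Fintype.card V - G.cliqueNum) :
    (G.maxDegree = G.cliqueNum ∨ G.maxDegree = G.cliqueNum + 1) ∧
      (G.maxDegree = G.cliqueNum + 1 →
        G.maxDegree = Fintype.card V - 1 ∧ G.minDegree = 1) :=
  stmt_18_general G hc h
end
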